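/- Let V be a real inner product space of dimension m with orthonormal basis e₁,…,e_m, and let c(e_j) = e^j∧ − ι_{e_j}, ĉ(e_j) = e^j∧ + ι_{e_j} act on Λ(V*). Then the supertrace (with respect to the even/odd grading of Λ(V*)) of the operator c(e₁)ĉ(e₁)·c(e₂)ĉ(e₂)·…·c(e_m)ĉ(e_m) equals (−2)^m. -/

import Mathlib

open Finset

/- We model the exterior algebra `Λ(V*)` of an `m`-dimensional real inner product space,
in the orthonormal basis `e^I` (`I ⊆ {1,…,m}`); operators are represented by matrices. -/

/-- Matrix of exterior multiplication `e^i ∧ ·`. -/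
noncomputable def wedgeM (m : ℕ) (i : Fin m) :
    Matrix (Finset (Fin m)) (Finset (Fin m)) ℝ :=
  Matrix.of fun J K =>
    if i ∉ K ∧ J = insert i K then (-1 : ℝ) ^ (K.filter fun j => j < i).card else 0

/-- Matrix of interior multiplication (contraction) `ι_{e_i}`. -/
noncomputable def contrM (m : ℕ) (i : Fin m) :
    Matrix (Finset (Fin m)) (Finset (Fin m)) ℝ :=
  Matrix.of fun J K =>
    if i ∈ K ∧ J = K.erase i then (-1 : ℝ) ^ (K.filter fun j => j < i).card else 0

/-- `c(e_i) = e^i∧ − ι_{e_i}`. -/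
noncomputable def cM (m : ℕ) (i : Fin m) := wedgeM m i - contrM m i

/-- `ĉ(e_i) = e^i∧ + ι_{e_i}`. -/
noncomputable def hcM (m : ℕ) (i : Fin m) := wedgeM m i + contrM m i

/-- The grading operator `τ = (−1)^{deg}` of the ℤ₂-grading `Λ^even ⊕ Λ^odd`. -/
noncomputable def tauM (m : ℕ) : Matrix (Finset (Fin m)) (Finset (Fin m)) ℝ :=
  Matrix.diagonal fun J => (-1 : ℝ) ^ J.card

/-! Since `(e^i∧)² = ι_{e_i}² = 0`, the operator `c(e_i)ĉ(e_i) = e^i∧ ι_{e_i} − ι_{e_i} e^i∧` is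
diagonal in the basis `e^K`, acting by `+1` if `i ∈ K` and by `−1` otherwise. Hence the product over
all `i` acts on `e^K` by `(−1)^{m−|K|}`, and after twisting by `τ` each of the `2^m` basis vectors
contributes `(−1)^m` to the trace. -/

open Matrix

theorem wedgeM_mul_self (m : ℕ) (i : Fin m) : wedgeM m i * wedgeM m i = 0 := by
  ext J K
  simp only [mul_apply, wedgeM, of_apply, Matrix.zero_apply]
  refine sum_eq_zero fun L _ => ?_
  split_ifs <;> simp_all

theorem contrM_mul_self (m : ℕ) (i : Fin m) : contrM m i * contrM m i = 0 := by
  ext J K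
  simp only [mul_apply, contrM, of_apply, Matrix.zero_apply]
  refine sum_eq_zero fun L _ => ?_
  split_ifs <;> simp_all

theorem wedgeM_mul_contrM (m : ℕ) (i : Fin m) :
    wedgeM m i * contrM m i = diagonal fun K => if i ∈ K then 1 else 0 := by
  ext J K
  simp only [mul_apply, wedgeM, contrM, of_apply, diagonal_apply]
  rw [sum_eq_single (K.erase i)]
  -- the two signs agree: erasing `i` does not change the set of indices below `i`
  · by_cases hi : i ∈ K
    · simp +contextual [hi, insert_erase hi, filter_erase, ← mul_pow]
    · simp +contextual [hi]
  · intro L _ hL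
    simp [hL]
  · simp

theorem contrM_mul_wedgeM (m : ℕ) (i : Fin m) :
    contrM m i * wedgeM m i = diagonal fun K => if i ∈ K then 0 else 1 := by
  ext J K
  simp only [mul_apply, wedgeM, contrM, of_apply, diagonal_apply]
  rw [sum_eq_single (insert i K)]
  · by_cases hi : i ∈ K
    · simp +contextual [hi]
    · simp +contextual [hi, filter_insert, ← mul_pow]
  · intro L _ hL
    simp [hL]
  · simp

theorem cM_mul_hcM (m : ℕ) (i : Fin m) :
    cM m i * hcM m i = diagonal fun K => if i ∈ K then 1 else -1 := by
  have expand : cM m i * hcM m i = wedgeM m i * wedgeM m i + wedgeM m i * contrM m i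
      - contrM m i * wedgeM m i - contrM m i * contrM m i := by
    simp only [cM, hcM]; noncomm_ring
  rw [expand, wedgeM_mul_self, contrM_mul_self, wedgeM_mul_contrM, contrM_mul_wedgeM,
    zero_add, sub_zero, diagonal_sub]
  congr 1; ext K; split_ifs <;> norm_num

theorem Matrix.list_prod_ofFn_diagonal {n : Type*} [Fintype n] [DecidableEq n] {α : Type*}
    [CommSemiring α] {k : ℕ} (d : Fin k → n → α) :
    (List.ofFn fun i => diagonal (d i)).prod = diagonal fun x => ∏ i, d i x := by
  have := map_list_prod (diagonalRingHom n α) (List.ofFn d)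
  simp only [List.map_ofFn, List.prod_ofFn, Function.comp_def, diagonalRingHom_apply] at this
  simpa [prod_fn] using this.symm

theorem neg_one_pow_card_mul_prod_sign {ι R : Type*} [Fintype ι] [DecidableEq ι] [CommRing R]
    (s : Finset ι) :
    (-1 : R) ^ s.card * ∏ i, (if i ∈ s then 1 else -1) = (-1) ^ Fintype.card ι := by
  calc _ = ∏ i, ((if i ∈ s then -1 else 1) * if i ∈ s then 1 else -1 : R) := by
        rw [← prod_const, ← Fintype.prod_ite_mem, ← prod_mul_distrib]
    _ = ∏ _i : ι, (-1 : R) := Fintype.prod_congr _ _ fun i => by split_ifs <;> simp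
    _ = _ := by rw [prod_const, card_univ]

/-- The supertrace `Tr_s[c(e₁)ĉ(e₁)⋯c(e_m)ĉ(e_m)] = Tr[τ · c(e₁)ĉ(e₁)⋯c(e_m)ĉ(e_m)]`
equals `(−2)^m`. -/
theorem stmt9 (m : ℕ) :
    (tauM m * (List.ofFn fun i : Fin m => cM m i * hcM m i).prod).trace
      = (-2 : ℝ) ^ m := by
  have product_diagonal : (List.ofFn fun i : Fin m => cM m i * hcM m i).prod =
      diagonal fun K => ∏ i, if i ∈ K then 1 else -1 := by
    simp only [cM_mul_hcM, list_prod_ofFn_diagonal]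
  rw [product_diagonal, tauM, diagonal_mul_diagonal, trace_diagonal]
  simp only [neg_one_pow_card_mul_prod_sign, Fintype.card_fin, sum_const,
    card_univ, Fintype.card_finset, nsmul_eq_mul]
  push_cast
  rw [← mul_pow]
  norm_num
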